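/- arXiv:0810.5421 — 2 statements merged into one kernel-verified Lean document; each statement's English description precedes it below -/
import Mathlib

section
/- For every β ∈ ℤ, Σ_{γ∈ℤ} D₁(γ)·ψ₁(h(β − γ)) equals 1 if β = 0 and equals 0 if β ≠ 0 (the sum has only finitely many nonzero terms). That is, D₁ is the discrete analogue of the differential operator d²/dx² − 1 on the grid {hβ}, satisfying D₁ * ψ₁ = δ. -/
/-- `ψ₁(x) = (sign x)/2 · (eˣ − e⁻ˣ)/2`, with `sign 0 = 0`. -/
noncomputable def psi1 (x : ℝ) : ℝ :=
  Real.sign x / 2 * ((Real.exp x - Real.exp (-x)) / 2)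

/-- The discrete operator `D₁`: `D₁(0) = 2(1+e^{2h})/(1−e^{2h})`,
`D₁(β) = −2e^h/(1−e^{2h})` for `|β| = 1`, and `D₁(β) = 0` for `|β| ≥ 2`. -/
noncomputable def D1 (h : ℝ) (β : ℤ) : ℝ :=
  if β = 0 then 2 * (1 + Real.exp (2 * h)) / (1 - Real.exp (2 * h))
  else if β.natAbs = 1 then -2 * Real.exp h / (1 - Real.exp (2 * h))
  else 0

/-! Writing ψ₁(x) = sinh |x| / 2, the operator D₁ becomes the three-point stencil
f ↦ (f(-1) + f(1) − 2 cosh h · f(0)) / sinh h. Because sinh(a + h) + sinh(a − h) = 2 cosh h · sinh a,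
this stencil annihilates γ ↦ sinh (h |β − γ|) except at the kink β = 0, where it returns
2 sinh h / (2 sinh h) = 1. -/

open Real

lemma psi1_eq_sinh_abs (x : ℝ) : psi1 x = sinh |x| / 2 := by
  rw [psi1, ← sinh_eq]
  rcases lt_trichotomy x 0 with hx | rfl | hx
  · rw [sign_of_neg hx, abs_of_neg hx, sinh_neg]; ring
  · simp
  · rw [sign_of_pos hx, abs_of_pos hx]; ring

lemma one_sub_exp_two_mul (h : ℝ) : 1 - exp (2 * h) = -(2 * exp h) * sinh h := by
  rw [sinh_eq, exp_neg, two_mul, exp_add]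
  field_simp
  ring

lemma one_add_exp_two_mul (h : ℝ) : 1 + exp (2 * h) = 2 * exp h * cosh h := by
  rw [cosh_eq, exp_neg, two_mul, exp_add]
  field_simp
  ring

lemma D1_zero (h : ℝ) : D1 h 0 = -(2 * cosh h / sinh h) := by
  rw [D1, if_pos rfl, one_add_exp_two_mul, one_sub_exp_two_mul, neg_mul, div_neg,
    mul_left_comm, mul_div_mul_left _ _ (by positivity)]

lemma D1_of_natAbs_eq_one (h : ℝ) {β : ℤ} (hβ : β.natAbs = 1) : D1 h β = (sinh h)⁻¹ := by
  have hβ0 : β ≠ 0 := by rintro rfl; simp at hβ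
  rw [D1, if_neg hβ0, if_pos hβ, one_sub_exp_two_mul, neg_mul 2,
    div_mul_cancel_left₀ (neg_ne_zero.mpr (by positivity))]

lemma support_D1_subset (h : ℝ) : Function.support (D1 h) ⊆ ({-1, 0, 1} : Finset ℤ) := by
  intro β hβ
  simp only [Function.mem_support, D1] at hβ
  split_ifs at hβ with h0 h1
  · simp [h0]
  · simp only [Finset.coe_insert, Finset.coe_singleton, Set.mem_insert_iff,
      Set.mem_singleton_iff]
    omega
  · exact absurd rfl hβ

lemma tsum_D1_mul (h : ℝ) (f : ℤ → ℝ) :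
    ∑' γ, D1 h γ * f γ = (f (-1) + f 1 - 2 * cosh h * f 0) / sinh h := by
  rw [tsum_eq_sum fun γ hγ => by
    rw [Function.notMem_support.mp (mt (@support_D1_subset h γ) hγ), zero_mul]]
  rw [Finset.sum_insert (by decide), Finset.sum_insert (by decide), Finset.sum_singleton,
    D1_zero, D1_of_natAbs_eq_one h rfl, D1_of_natAbs_eq_one h rfl]
  ring

lemma sinh_mul_abs_add_one_add_sinh_mul_abs_sub_one (h : ℝ) (β : ℤ) :
    sinh (h * |(β : ℝ) + 1|) + sinh (h * |(β : ℝ) - 1|) =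
      2 * cosh h * sinh (h * |(β : ℝ)|) + if β = 0 then 2 * sinh h else 0 := by
  have sum_sinh (a : ℝ) : sinh (a + h) + sinh (a - h) = 2 * cosh h * sinh a := by
    rw [sinh_add, sinh_sub]; ring
  rcases lt_trichotomy β 0 with hβ | rfl | hβ
  · have hβ' : (β : ℝ) ≤ -1 := by exact_mod_cast Int.le_sub_one_of_lt hβ
    rw [if_neg hβ.ne, add_zero, abs_of_nonpos (by linarith), abs_of_neg (by linarith),
      abs_of_neg (by linarith), ← sum_sinh, add_comm]
    ring_nf
  · simp only [Int.cast_zero, zero_add, abs_one, mul_one, zero_sub, abs_neg, abs_zero, mul_zero,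
      sinh_zero, ↓reduceIte]
    ring
  · have hβ' : (1 : ℝ) ≤ β := by exact_mod_cast hβ
    rw [if_neg hβ.ne', add_zero, abs_of_pos (by linarith), abs_of_nonneg (by linarith),
      abs_of_pos (by linarith), ← sum_sinh]
    ring_nf

/-- `D₁` is the discrete analogue of `d²/dx² − 1` on the grid `{hβ}`:
`D₁ * ψ₁ = δ` (the sum has only finitely many nonzero terms). -/
theorem D1_conv_psi1_eq_delta (N : ℕ) (hN : 1 ≤ N) (h : ℝ) (hh : h = 1 / N) (β : ℤ) :
    (Function.support fun γ : ℤ => D1 h γ * psi1 (h * (β - γ))).Finite ∧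
    ∑' γ : ℤ, D1 h γ * psi1 (h * (β - γ)) = if β = 0 then 1 else 0 := by
  have hh0 : 0 < h := by
    rw [hh]
    exact one_div_pos.mpr (by exact_mod_cast hN)
  refine ⟨(Finset.finite_toSet _).subset
    ((Function.support_mul_subset_left _ _).trans (support_D1_subset h)), ?_⟩
  have hψ (γ : ℤ) : psi1 (h * (β - γ)) = sinh (h * |(β : ℝ) - γ|) / 2 := by
    rw [psi1_eq_sinh_abs, abs_mul, abs_of_pos hh0]
  simp only [tsum_D1_mul, hψ, Int.cast_neg, Int.cast_one, Int.cast_zero, sub_neg_eq_add, sub_zero]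
  have hrec := sinh_mul_abs_add_one_add_sinh_mul_abs_sub_one h β
  have hs : sinh h ≠ 0 := (sinh_pos_iff.mpr hh0).ne'
  split_ifs at hrec ⊢ <;> field_simp <;> linarith
end

section
/- Σ_{β=0}^N C(β)·e^{−hβ} = 1 − e^{−1}; that is, the quadrature formula ∫₀¹ φ(x) dx ≈ Σ_{β=0}^N C(β)·φ(hβ) with these coefficients is exact for the function φ(x) = e^{−x}. -/
/-! With `a = (e^h − 1)/(e^h + 1) = tanh (h/2)`, the weights are `a` times the trapezoidal
weights, so the quadrature sum is `a · Σ_{β<N} (φ(hβ) + φ(hβ + h))`. For `φ(x) = e^{−x}` each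
trapezoid term `a (e^{−x} + e^{−x−h})` equals `e^{−x} − e^{−x−h}` exactly, and the sum
telescopes to `e^0 − e^{−hN} = 1 − e^{−1}`. -/

open Finset Real

theorem sum_trapezoid_weights_mul {R : Type*} [CommSemiring R] (f C : ℕ → R) (c : R) {N : ℕ}
    (hN : 1 ≤ N) (hC0 : C 0 = c) (hCN : C N = c)
    (hCmid : ∀ β : ℕ, 1 ≤ β → β ≤ N - 1 → C β = 2 * c) :
    ∑ β ∈ range (N + 1), C β * f β = c * ∑ β ∈ range N, (f β + f (β + 1)) := by
  obtain ⟨M, rfl⟩ : ∃ M, N = M + 1 := ⟨N - 1, by omega⟩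
  have hinterior : ∑ β ∈ range M, C (β + 1) * f (β + 1) = ∑ β ∈ range M, 2 * c * f (β + 1) :=
    sum_congr rfl fun β hβ => by rw [hCmid (β + 1) (by omega) (by simp at hβ; omega)]
  rw [sum_range_succ, sum_range_succ', hinterior, hC0, hCN, sum_add_distrib, sum_range_succ',
    sum_range_succ, ← mul_sum]
  ring

theorem exp_sub_one_div_exp_add_one_mul_add (x h : ℝ) :
    (exp h - 1) / (exp h + 1) * (exp (-x) + exp (-(x + h))) = exp (-x) - exp (-(x + h)) := by
  rw [neg_add, exp_add, exp_neg h]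
  field_simp

/-- The quadrature formula with coefficients `C(0) = C(N) = (e^h − 1)/(e^h + 1)` and
`C(β) = 2(e^h − 1)/(e^h + 1)` for `1 ≤ β ≤ N − 1`, at the nodes `hβ`, is exact for
the function `φ(x) = e^{−x}`: `Σ_{β=0}^N C(β)·e^{−hβ} = 1 − e^{−1}`. -/
theorem quadrature_W1_exact_exp_neg (N : ℕ) (hN : 1 ≤ N) (h : ℝ) (hh : h = 1 / N)
    (C : ℕ → ℝ)
    (hC0 : C 0 = (Real.exp h - 1) / (Real.exp h + 1))
    (hCN : C N = (Real.exp h - 1) / (Real.exp h + 1))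
    (hCmid : ∀ β : ℕ, 1 ≤ β → β ≤ N - 1 → C β = 2 * (Real.exp h - 1) / (Real.exp h + 1)) :
    ∑ β ∈ Finset.range (N + 1), C β * Real.exp (-(h * β)) = 1 - Real.exp (-1) := by
  set f : ℕ → ℝ := fun β => exp (-(h * β))
  have hstep (β : ℕ) :
      (exp h - 1) / (exp h + 1) * (f β + f (β + 1)) = f β - f (β + 1) := by
    simpa [f, mul_add] using exp_sub_one_div_exp_add_one_mul_add (h * β) h
  have hhN : h * N = 1 := by
    rw [hh, one_div_mul_cancel (by positivity)]
  calc ∑ β ∈ range (N + 1), C β * f β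
      = (exp h - 1) / (exp h + 1) * ∑ β ∈ range N, (f β + f (β + 1)) :=
        sum_trapezoid_weights_mul f C _ hN hC0 hCN fun β h1 h2 => by
          rw [hCmid β h1 h2, mul_div_assoc]
    _ = ∑ β ∈ range N, (f β - f (β + 1)) := by simp only [mul_sum, hstep]
    _ = f 0 - f N := sum_range_sub' f N
    _ = 1 - exp (-1) := by simp [f, hhN]
end
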